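/- For matrices C ∈ GL(2,ℝ), B ∈ SO(2,ℝ), Z, b ∈ gl(2,ℝ) satisfying bC⁻¹L + LᵗC⁻¹ᵗb = ᵗZZ, the block matrix a(C,B,Z,b) = [[LᵗC⁻¹L, ᵗZ, b],[0, B, BZLC],[0, 0, C]] satisfies ᵗa h a = h, i.e., lies in the pseudo-orthogonal group of h. -/
import Mathlib


open Matrix

/-- The 2×2 matrix L = [[0,1],[1,0]]. -/
def Lm : Matrix (Fin 2) (Fin 2) ℝ := !![0, 1; 1, 0]

/-- The 2×2 matrix I₁,₁ = diag(1,-1). -/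
def I11 : Matrix (Fin 2) (Fin 2) ℝ := !![1, 0; 0, -1]

/-- Assemble a 6×6 matrix from a 3×3 array of 2×2 blocks. -/
def blk (M : Matrix (Fin 3) (Fin 3) (Matrix (Fin 2) (Fin 2) ℝ)) :
    Matrix (Fin 6) (Fin 6) ℝ :=
  Matrix.of fun i j =>
    M ⟨i.val / 2, by have := i.isLt; omega⟩ ⟨j.val / 2, by have := j.isLt; omega⟩
      ⟨i.val % 2, by have := i.isLt; omega⟩ ⟨j.val % 2, by have := j.isLt; omega⟩

/-- The matrix h of the Lie sphere bilinear form, in 2×2 blocks. -/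
def hm : Matrix (Fin 6) (Fin 6) ℝ := blk !![0, 0, -Lm; 0, 1, 0; -Lm, 0, 0]

/-- The block matrix a(C,B,Z,b). -/
noncomputable def aMat (C B Z b : Matrix (Fin 2) (Fin 2) ℝ) :
    Matrix (Fin 6) (Fin 6) ℝ :=
  blk !![Lm * (C⁻¹)ᵀ * Lm, Zᵀ, b;
         0, B, B * Z * Lm * C;
         0, 0, C]

def eFin : Fin 6 ≃ Fin 3 × Fin 2 :=
  (finCongr (by norm_num : 6 = 3 * 2)).trans finProdFinEquiv.symm

lemma blk_eq (M : Matrix (Fin 3) (Fin 3) (Matrix (Fin 2) (Fin 2) ℝ)) :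
    blk M = (Matrix.compRingEquiv (Fin 3) (Fin 2) ℝ M).submatrix eFin eFin := rfl

lemma blk_mul (M N : Matrix (Fin 3) (Fin 3) (Matrix (Fin 2) (Fin 2) ℝ)) :
    blk M * blk N = blk (M * N) := by
  rw [blk_eq, blk_eq, blk_eq, _root_.map_mul]
  exact Matrix.submatrix_mul_equiv _ _ _ _ _

lemma blk_transpose (M : Matrix (Fin 3) (Fin 3) (Matrix (Fin 2) (Fin 2) ℝ)) :
    (blk M)ᵀ = blk (Matrix.of fun i j => (M j i)ᵀ) := by
  ext i j
  simp [blk, Matrix.transpose_apply]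

lemma Lm_mul_Lm : Lm * Lm = 1 := by
  ext i j
  fin_cases i <;> fin_cases j <;> simp [Lm, Matrix.mul_apply, Fin.sum_univ_two]

lemma Lm_transpose : Lmᵀ = Lm := by
  ext i j
  fin_cases i <;> fin_cases j <;> simp [Lm]

/-- For C invertible, B ∈ SO(2), and b C⁻¹ L + L ᵗC⁻¹ ᵗb = ᵗZ Z, the matrix
a(C,B,Z,b) satisfies ᵗa h a = h. -/
theorem stmt9 (C B Z b : Matrix (Fin 2) (Fin 2) ℝ)
    (hC : IsUnit C) (hB : Bᵀ * B = 1) (hBdet : B.det = 1)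
    (hb : b * C⁻¹ * Lm + Lm * (C⁻¹)ᵀ * bᵀ = Zᵀ * Z) :
    (aMat C B Z b)ᵀ * hm * aMat C B Z b = hm := by
  have hC' : IsUnit C.det := (Matrix.isUnit_iff_isUnit_det C).mp hC
  have h1 : C⁻¹ * C = 1 := Matrix.nonsing_inv_mul C hC'
  have h1t : Cᵀ * (C⁻¹)ᵀ = 1 := by
    rw [← Matrix.transpose_mul, h1, Matrix.transpose_one]
  rw [aMat, hm, blk_transpose, blk_mul, blk_mul]
  refine congrArg blk ?_
  ext i j : 1
  fin_cases i <;> fin_cases j <;>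
    simp [Matrix.mul_apply, Fin.sum_univ_three, Matrix.transpose_mul,
      Matrix.transpose_transpose, Lm_transpose, Matrix.vecHead, Matrix.vecTail,
      Function.comp]
  · calc Lm * (C⁻¹ * Lm) * Lm * C = Lm * C⁻¹ * (Lm * Lm) * C := by noncomm_ring
      _ = Lm * (C⁻¹ * C) := by rw [Lm_mul_Lm]; noncomm_ring
      _ = Lm := by rw [h1, mul_one]
  · exact hB
  · have e : Bᵀ * (B * Z * Lm * C) = Z * Lm * C := by
      calc Bᵀ * (B * Z * Lm * C) = (Bᵀ * B) * (Z * Lm * C) := by noncomm_ring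
        _ = Z * Lm * C := by rw [hB, one_mul]
    rw [e, add_neg_cancel]
  · calc Cᵀ * Lm * (Lm * C⁻¹ᵀ * Lm)
          = Cᵀ * (Lm * Lm) * (C⁻¹ᵀ * Lm) := by noncomm_ring
      _ = (Cᵀ * C⁻¹ᵀ) * Lm := by rw [Lm_mul_Lm]; noncomm_ring
      _ = Lm := by rw [h1t, one_mul]
  · have e : Cᵀ * (Lm * (Zᵀ * Bᵀ)) * B = Cᵀ * Lm * Zᵀ := by
      calc Cᵀ * (Lm * (Zᵀ * Bᵀ)) * B = (Cᵀ * Lm * Zᵀ) * (Bᵀ * B) := by noncomm_ring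
        _ = Cᵀ * Lm * Zᵀ := by rw [hB, mul_one]
    rw [e, neg_add_cancel]
  · have e : Cᵀ * (Lm * (Zᵀ * Bᵀ)) * (B * Z * Lm * C)
        = Cᵀ * Lm * b + bᵀ * Lm * C := by
      calc Cᵀ * (Lm * (Zᵀ * Bᵀ)) * (B * Z * Lm * C)
          = (Cᵀ * Lm * Zᵀ) * (Bᵀ * B) * (Z * Lm * C) := by noncomm_ring
        _ = Cᵀ * Lm * (Zᵀ * Z) * Lm * C := by rw [hB, mul_one]; noncomm_ring
        _ = Cᵀ * Lm * (b * C⁻¹ * Lm + Lm * (C⁻¹)ᵀ * bᵀ) * Lm * C := by rw [hb]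
        _ = Cᵀ * Lm * b * (C⁻¹ * (Lm * Lm) * C)
            + Cᵀ * (Lm * Lm) * C⁻¹ᵀ * (bᵀ * Lm * C) := by noncomm_ring
        _ = Cᵀ * Lm * b * (C⁻¹ * C) + (Cᵀ * C⁻¹ᵀ) * (bᵀ * Lm * C) := by
            rw [Lm_mul_Lm]; noncomm_ring
        _ = Cᵀ * Lm * b + bᵀ * Lm * C := by rw [h1, h1t, mul_one, one_mul]
    rw [e]
    abel
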